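/- Let n ≥ 2 and m ≥ 1, and let H be the graph obtained from the join of the coclique on m vertices with the complete graph K_n, with a separate one-way infinite path attached at each coclique vertex. Then every clique vertex v of K_n is sedentary in the quantitative sense that for all real t, |⟨e_v, e^{−itA(H)} e_v⟩| ≥ 1 − 2/n. -/

import Mathlib

noncomputable section

/-- Vertices of the join of a coclique `\overline{K}_m` with the clique `K_n`, with a
separate one-way infinite path attached at each coclique vertex:
`Sum.inl k` is the clique vertex `v_{k}`, `Sum.inr (Sum.inl i)` is the coclique vertex
`c_{i}`, and `Sum.inr (Sum.inr (i, j))` is the tail vertex `q_{i, j+1}`. -/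
abbrev JoinTailV (n m : ℕ) := Fin n ⊕ (Fin m ⊕ (Fin m × ℕ))

/-- Adjacency in the graph `H`: the `v_k` are pairwise adjacent (forming `K_n`), each `c_i`
is adjacent to every `v_k`, and for each `i` the vertices `c_i, q_{i,1}, q_{i,2}, …`
form a one-way infinite path. -/
def joinTailAdj (n m : ℕ) (x y : JoinTailV n m) : Prop :=
  (∃ k k' : Fin n, k ≠ k' ∧ x = Sum.inl k ∧ y = Sum.inl k') ∨
  (∃ (k : Fin n) (i : Fin m),
    (x = Sum.inl k ∧ y = Sum.inr (Sum.inl i)) ∨ (y = Sum.inl k ∧ x = Sum.inr (Sum.inl i))) ∨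
  (∃ i : Fin m,
    (x = Sum.inr (Sum.inl i) ∧ y = Sum.inr (Sum.inr (i, 0))) ∨
    (y = Sum.inr (Sum.inl i) ∧ x = Sum.inr (Sum.inr (i, 0)))) ∨
  (∃ (i : Fin m) (j : ℕ),
    (x = Sum.inr (Sum.inr (i, j)) ∧ y = Sum.inr (Sum.inr (i, j + 1))) ∨
    (y = Sum.inr (Sum.inr (i, j)) ∧ x = Sum.inr (Sum.inr (i, j + 1))))

/-- The Hilbert space `ℓ²(V(H))`. -/
abbrev joinTailSpace (n m : ℕ) := lp (fun _ : JoinTailV n m => ℂ) 2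

/-- The standard orthonormal basis vector `e_w` of `ℓ²(V(H))`. -/
def stdVec {n m : ℕ} (w : JoinTailV n m) : joinTailSpace n m := lp.single 2 w 1

open scoped Classical

/-! Let `g` be the sum of the clique basis vectors and `s = g / n`. Since
`A e_v = g - e_v + ∑ i, e_{c_i}` for every clique vertex, the vector `w = e_v - s` satisfies
`A w = -w`, so `U = exp(-itA)` only multiplies it by the phase `e^{it}`. Now `w ⊥ s` and `U` is
unitary, hence `⟨e_v, U e_v⟩ = e^{it} ‖w‖² + ⟨s, U s⟩` and
`|⟨e_v, U e_v⟩| ≥ ‖w‖² - ‖s‖² = (1 - 1/n) - 1/n`. -/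

open scoped InnerProductSpace

theorem NormedSpace.exp_apply_of_apply_eq_smul {𝕂 E : Type*} [RCLike 𝕂] [NormedAddCommGroup E]
    [NormedSpace 𝕂 E] [CompleteSpace E] {B : E →L[𝕂] E} {v : E} {c : 𝕂} (h : B v = c • v) :
    NormedSpace.exp B v = NormedSpace.exp c • v := by
  have hpow : ∀ p : ℕ, (B ^ p) v = c ^ p • v := by
    intro p
    induction p with
    | zero => simp
    | succ p ih => rw [pow_succ', mul_apply_eq_comp, ih, map_smul, h, smul_smul, pow_succ]
  have hB := (NormedSpace.exp_series_hasSum_exp' (𝕂 := 𝕂) B).mapL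
    (ContinuousLinearMap.apply 𝕂 E v)
  have hc := (NormedSpace.exp_series_hasSum_exp' (𝕂 := 𝕂) c).smul_const v
  simp only [ContinuousLinearMap.apply_apply, smul_apply, hpow, smul_smul, smul_eq_mul] at hB hc
  exact hB.unique hc

theorem IsSelfAdjoint.exp_neg_mul_I_smul_mem_unitary {𝔸 : Type*} [CStarAlgebra 𝔸] {a : 𝔸}
    (ha : IsSelfAdjoint a) (t : ℝ) :
    NormedSpace.exp ((-(t : ℂ) * Complex.I) • a) ∈ unitary 𝔸 := by
  let +nondep : NormedAlgebra ℚ 𝔸 := .restrictScalars ℚ ℂ 𝔸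
  exact NormedSpace.exp_mem_unitary_of_mem_skewAdjoint
    (ha.smul_mem_skewAdjoint (by simp [skewAdjoint.mem_iff]))

theorem norm_sq_sub_two_mul_norm_sq_le_norm_inner_map_self {𝕜 E : Type*} [RCLike 𝕜]
    [NormedAddCommGroup E] [InnerProductSpace 𝕜 E] [CompleteSpace E] {U : E →L[𝕜] E}
    (hU : U ∈ unitary (E →L[𝕜] E)) {e s : E} {μ : 𝕜} (hμ : U (e - s) = μ • (e - s))
    (hs : ⟪e - s, s⟫_𝕜 = 0) :
    ‖e‖ ^ 2 - 2 * ‖s‖ ^ 2 ≤ ‖⟪e, U e⟫_𝕜‖ := by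
  set w := e - s
  have he : e = w + s := (sub_add_cancel e s).symm
  have hsw : ⟪s, w⟫_𝕜 = 0 := by rw [← inner_conj_symm, hs, map_zero]
  have hwUs : ⟪w, U s⟫_𝕜 = 0 := by
    by_cases hμ0 : μ = 0
    · have hw0 : w = 0 := by
        rw [← norm_eq_zero, ← U.norm_map_of_mem_unitary hU, hμ, hμ0, zero_smul, norm_zero]
      rw [hw0, inner_zero_left]
    · have := U.inner_map_map_of_mem_unitary hU w s
      rw [hμ, inner_smul_left, hs, mul_eq_zero] at this
      simpa [hμ0] using this
  have hwUw : ‖⟪w, U w⟫_𝕜‖ = ‖w‖ ^ 2 := by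
    have hμw : ‖μ‖ * ‖w‖ = ‖w‖ := by rw [← norm_smul, ← hμ, U.norm_map_of_mem_unitary hU]
    rw [hμ, inner_smul_right, norm_mul, inner_self_eq_norm_sq_to_K, norm_pow, RCLike.norm_ofReal,
      abs_norm, sq, ← mul_assoc, hμw]
  have hsplit : ⟪e, U e⟫_𝕜 = ⟪w, U w⟫_𝕜 + ⟪s, U s⟫_𝕜 := by
    rw [he, map_add, inner_add_left, inner_add_right, inner_add_right, hwUs, hμ, inner_smul_right,
      inner_smul_right, hsw]
    ring
  have hpyth : ‖e‖ ^ 2 = ‖w‖ ^ 2 + ‖s‖ ^ 2 := by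
    simpa only [he, sq] using norm_add_sq_eq_norm_sq_add_norm_sq_of_inner_eq_zero w s hs
  have hsUs : ‖⟪s, U s⟫_𝕜‖ ≤ ‖s‖ ^ 2 := by
    simpa [U.norm_map_of_mem_unitary hU, sq] using norm_inner_le_norm (𝕜 := 𝕜) s (U s)
  rw [hsplit]
  have := norm_sub_norm_le ⟪w, U w⟫_𝕜 (-⟪s, U s⟫_𝕜)
  rw [sub_neg_eq_add, norm_neg] at this
  linarith

theorem inner_stdVec_left {n m : ℕ} (x : JoinTailV n m) (f : joinTailSpace n m) :
    ⟪stdVec x, f⟫_ℂ = f x := by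
  simp [stdVec, lp.inner_single_left]

theorem stdVec_apply {n m : ℕ} (x y : JoinTailV n m) : stdVec x y = if y = x then 1 else 0 := by
  simp [stdVec, lp.single_apply, Pi.single_apply]

theorem norm_stdVec {n m : ℕ} (x : JoinTailV n m) : ‖stdVec x‖ = 1 := by
  simp [stdVec, lp.norm_single]

theorem sum_stdVec_apply {n m : ℕ} {ι : Type*} (s : Finset ι) (v : ι → JoinTailV n m)
    (x : JoinTailV n m) : (∑ i ∈ s, stdVec (v i)) x = ∑ i ∈ s, if x = v i then 1 else 0 := by
  rw [lp.coeFn_sum, Finset.sum_apply]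
  simp [stdVec_apply]

def cliqueSum (n m : ℕ) : joinTailSpace n m := ∑ k, stdVec (Sum.inl k)

def cocliqueSum (n m : ℕ) : joinTailSpace n m := ∑ i, stdVec (Sum.inr (Sum.inl i))

def cliqueMean (n m : ℕ) : joinTailSpace n m := (n : ℂ)⁻¹ • cliqueSum n m

def IsJoinTailAdjacency {n m : ℕ} (A : joinTailSpace n m →L[ℂ] joinTailSpace n m) : Prop :=
  ∀ x y : JoinTailV n m, ⟪stdVec x, A (stdVec y)⟫_ℂ = if joinTailAdj n m x y then 1 else 0

theorem IsJoinTailAdjacency.apply_stdVec_inl {n m : ℕ}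
    {A : joinTailSpace n m →L[ℂ] joinTailSpace n m} (hA : IsJoinTailAdjacency A) (k : Fin n) :
    A (stdVec (Sum.inl k)) = cliqueSum n m - stdVec (Sum.inl k) + cocliqueSum n m := by
  ext x
  rw [← inner_stdVec_left, hA]
  simp only [cliqueSum, cocliqueSum, lp.coeFn_add, lp.coeFn_sub, Pi.add_apply, Pi.sub_apply,
    sum_stdVec_apply, stdVec_apply]
  rcases x with j | i | p
  · by_cases h : j = k <;> simp [joinTailAdj, h]
  · simp [joinTailAdj]
  · simp [joinTailAdj]

theorem IsJoinTailAdjacency.apply_cliqueSum {n m : ℕ}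
    {A : joinTailSpace n m →L[ℂ] joinTailSpace n m} (hA : IsJoinTailAdjacency A) :
    A (cliqueSum n m) = ((n : ℂ) - 1) • cliqueSum n m + (n : ℂ) • cocliqueSum n m := by
  have hsum : ∑ k : Fin n, stdVec (Sum.inl k : JoinTailV n m) = cliqueSum n m := rfl
  conv_lhs => rw [cliqueSum, map_sum]
  simp only [hA.apply_stdVec_inl, Finset.sum_add_distrib, Finset.sum_sub_distrib,
    Finset.sum_const, Finset.card_univ, Fintype.card_fin, hsum, ← Nat.cast_smul_eq_nsmul ℂ]
  module

theorem IsJoinTailAdjacency.apply_stdVec_inl_sub_cliqueMean {n m : ℕ}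
    {A : joinTailSpace n m →L[ℂ] joinTailSpace n m} (hA : IsJoinTailAdjacency A) (k : Fin n) :
    A (stdVec (Sum.inl k) - cliqueMean n m) = -(stdVec (Sum.inl k) - cliqueMean n m) := by
  have hn : (n : ℂ) ≠ 0 := Nat.cast_ne_zero.2 k.pos.ne'
  rw [cliqueMean, map_sub, map_smul, hA.apply_stdVec_inl, hA.apply_cliqueSum]
  match_scalars <;> field_simp <;> ring

theorem inner_stdVec_inl_cliqueSum {n m : ℕ} (k : Fin n) :
    ⟪stdVec (Sum.inl k : JoinTailV n m), cliqueSum n m⟫_ℂ = 1 := by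
  rw [inner_stdVec_left, cliqueSum, sum_stdVec_apply]
  simp

theorem inner_cliqueSum_self (n m : ℕ) : ⟪cliqueSum n m, cliqueSum n m⟫_ℂ = n := by
  conv_lhs => arg 2; rw [cliqueSum]
  simp [inner_stdVec_inl_cliqueSum]

theorem inner_cliqueMean_self (n m : ℕ) : ⟪cliqueMean n m, cliqueMean n m⟫_ℂ = (n : ℂ)⁻¹ := by
  rcases eq_or_ne (n : ℂ) 0 with hn | hn
  · simp [cliqueMean, hn]
  · rw [cliqueMean, inner_smul_left, inner_smul_right, inner_cliqueSum_self]
    simp [hn]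

theorem norm_cliqueMean_sq (n m : ℕ) : ‖cliqueMean n m‖ ^ 2 = (n : ℝ)⁻¹ := by
  rw [@norm_sq_eq_re_inner ℂ, inner_cliqueMean_self]
  simp

theorem inner_stdVec_inl_sub_cliqueMean_cliqueMean {n m : ℕ} (k : Fin n) :
    ⟪stdVec (Sum.inl k) - cliqueMean n m, cliqueMean n m⟫_ℂ = 0 := by
  rw [inner_sub_left, inner_cliqueMean_self, cliqueMean, inner_smul_right,
    inner_stdVec_inl_cliqueSum, mul_one, sub_self]

theorem join_clique_sedentary_general (n m : ℕ)
    (A : joinTailSpace n m →L[ℂ] joinTailSpace n m) (hsa : IsSelfAdjoint A)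
    (hA : ∀ x y : JoinTailV n m, (inner ℂ (stdVec x) (A (stdVec y)) : ℂ)
      = if joinTailAdj n m x y then 1 else 0)
    (k : Fin n) (t : ℝ) :
    1 - 2 / (n : ℝ)
      ≤ ‖
          (inner ℂ (stdVec (Sum.inl k : JoinTailV n m))
            (NormedSpace.exp ((-(t : ℂ) * Complex.I) • A)
              (stdVec (Sum.inl k : JoinTailV n m))))‖ := by
  have heigen : ((-(t : ℂ) * Complex.I) • A) (stdVec (Sum.inl k) - cliqueMean n m)
      = ((t : ℂ) * Complex.I) • (stdVec (Sum.inl k) - cliqueMean n m) := by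
    rw [smul_apply, IsJoinTailAdjacency.apply_stdVec_inl_sub_cliqueMean hA, smul_neg,
      ← neg_smul, neg_mul, neg_neg]
  have key := norm_sq_sub_two_mul_norm_sq_le_norm_inner_map_self
    (hsa.exp_neg_mul_I_smul_mem_unitary t) (NormedSpace.exp_apply_of_apply_eq_smul heigen)
    (inner_stdVec_inl_sub_cliqueMean_cliqueMean k)
  rw [norm_stdVec, norm_cliqueMean_sq] at key
  calc 1 - 2 / (n : ℝ) = 1 ^ 2 - 2 * (n : ℝ)⁻¹ := by ring
    _ ≤ _ := key

/-- Let `n ≥ 2` and `m ≥ 1`, and let `H` be the join of the coclique on `m` vertices with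
the clique `K_n`, with a separate one-way infinite path attached at each coclique vertex.
Every clique vertex `v` of `K_n` is sedentary: for all real `t`,
`|⟨e_v, e^{-itA(H)} e_v⟩| ≥ 1 - 2/n`. -/
theorem join_clique_sedentary (n m : ℕ) (hn : 2 ≤ n) (hm : 1 ≤ m)
    (A : joinTailSpace n m →L[ℂ] joinTailSpace n m) (hsa : IsSelfAdjoint A)
    (hA : ∀ x y : JoinTailV n m, (inner ℂ (stdVec x) (A (stdVec y)) : ℂ)
      = if joinTailAdj n m x y then 1 else 0)
    (k : Fin n) (t : ℝ) :
    1 - 2 / (n : ℝ)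
      ≤ ‖
          (inner ℂ (stdVec (Sum.inl k : JoinTailV n m))
            (NormedSpace.exp ((-(t : ℂ) * Complex.I) • A)
              (stdVec (Sum.inl k : JoinTailV n m))))‖ :=
  join_clique_sedentary_general n m A hsa hA k t
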